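/- Let $\Gamma \subseteq \mathbb{R}^n$ be a convex set, $g : \Gamma \to \mathbb{R}^r$ a function each of whose components is convex on $\Gamma$, and $h : \Gamma \to \mathbb{R}$ a convex function. Suppose there exists $\bar{x} \in \Gamma$ with $g(\bar{x}) < 0$ componentwise (Slater condition). Then the implication 'for all $x \in \Gamma$, $g(x) \le 0$ implies $h(x) \ge 0$' holds if and only if there exists $v \in \mathbb{R}^r$ with $v \ge 0$ such that $h(x) + v^\top g(x) \ge 0$ for all $x \in \Gamma$. -/

import Mathlib

/-!
Separate the origin from the open convex set `S` of all `u` that strictly dominate `G x`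
componentwise for some `x ∈ Γ`, where `G` collects `h` and the components of `g`; the
implication gives `0 ∉ S`. Since `S` is closed under adding nonnegative vectors,
the separating functional has nonpositive coefficients, and since `G x` lies in the closure
of `S` it gives a nonnegative, nonzero combination of `h` and the `g i` that is nonnegative on
`Γ`. The Slater point forces the coefficient of `h` to be positive; dividing by it yields `v`.
-/

open Set

theorem nonpos_of_forall_pos_add_mul_neg {a b : ℝ} (h : ∀ t > 0, a + t * b < 0) :
    a ≤ 0 ∧ b ≤ 0 := by
  constructor
  · by_contra! ha
    have ht : 0 < a / (|b| + 1) := by positivity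
    have hbound : a / (|b| + 1) * (|b| + 1) = a := div_mul_cancel₀ _ (by positivity)
    nlinarith [h _ ht, neg_abs_le b]
  · by_contra! hb
    have := h ((|a| + 1) / b) (by positivity)
    rw [div_mul_cancel₀ _ hb.ne'] at this
    linarith [neg_abs_le a]

theorem Finset.sum_mul_neg_of_nonneg_of_ne_zero {ι : Type*} [Fintype ι] {v x : ι → ℝ}
    (hv : 0 ≤ v) (hv₀ : v ≠ 0) (hx : ∀ i, x i < 0) : ∑ i, v i * x i < 0 := by
  obtain ⟨i, hi⟩ := Function.ne_iff.1 hv₀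
  have hpos : 0 < v i := lt_of_le_of_ne (hv i) (Ne.symm hi)
  calc ∑ i, v i * x i < ∑ _i : ι, (0 : ℝ) :=
        Finset.sum_lt_sum (fun j _ => mul_nonpos_of_nonneg_of_nonpos (hv j) (hx j).le)
          ⟨i, Finset.mem_univ i, mul_neg_of_pos_of_neg hpos (hx i)⟩
    _ = 0 := Finset.sum_const_zero

def strictUpperImage {E κ : Type*} (Γ : Set E) (G : E → κ → ℝ) : Set (κ → ℝ) :=
  {u | ∃ x ∈ Γ, ∀ j, G x j < u j}

theorem isOpen_strictUpperImage {E κ : Type*} [Finite κ] {Γ : Set E} {G : E → κ → ℝ} :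
    IsOpen (strictUpperImage Γ G) :=
  isOpen_iff_forall_mem_open.2 fun _ ⟨x, hx, hu⟩ =>
    ⟨univ.pi fun j => Ioi (G x j), fun _ hv => ⟨x, hx, by simpa using hv⟩,
      isOpen_set_pi finite_univ fun _ _ => isOpen_Ioi, by simpa using hu⟩

theorem convex_strictUpperImage {E κ : Type*} [AddCommGroup E] [Module ℝ E] {Γ : Set E}
    {G : E → κ → ℝ} (hΓ : Convex ℝ Γ) (hG : ∀ j, ConvexOn ℝ Γ fun x => G x j) :
    Convex ℝ (strictUpperImage Γ G) := by
  rintro u ⟨x, hx, hu⟩ v ⟨y, hy, hv⟩ a b ha hb hab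
  refine ⟨a • x + b • y, hΓ hx hy ha hb hab, fun j => ?_⟩
  have := (hG j).convex_strict_epigraph (x := (x, u j)) (y := (y, v j)) ⟨hx, hu j⟩ ⟨hy, hv j⟩
    ha hb hab
  simpa using this.2

theorem add_smul_one_add_mem_strictUpperImage {E κ : Type*} {Γ : Set E} {G : E → κ → ℝ}
    {x : E} (hx : x ∈ Γ) {s : ℝ} (hs : 0 < s) {v : κ → ℝ} (hv : 0 ≤ v) :
    G x + s • 1 + v ∈ strictUpperImage Γ G :=
  ⟨x, hx, fun j => by
    simp only [Pi.add_apply, Pi.smul_apply, Pi.one_apply, smul_eq_mul, mul_one]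
    linarith [add_pos_of_pos_of_nonneg hs (hv j)]⟩

theorem LinearMap.eq_sum_mul_single {κ : Type*} [Fintype κ] [DecidableEq κ]
    (f : (κ → ℝ) →ₗ[ℝ] ℝ) (u : κ → ℝ) : f u = ∑ j, f (Pi.single j 1) * u j := by
  rw [f.pi_apply_eq_sum_univ u]
  refine Finset.sum_congr rfl fun j _ => ?_
  rw [smul_eq_mul, mul_comm]
  congr
  ext k
  simp [Pi.single_apply, eq_comm]

/-- Fan–Glicksberg–Hoffman theorem of the alternative. -/
theorem exists_nonneg_ne_zero_sum_mul_nonneg {E κ : Type*} [AddCommGroup E] [Module ℝ E]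
    [Fintype κ] {Γ : Set E} {G : E → κ → ℝ} (hΓ : Convex ℝ Γ)
    (hG : ∀ j, ConvexOn ℝ Γ fun x => G x j) (hne : Γ.Nonempty)
    (hinc : ∀ x ∈ Γ, ∃ j, 0 ≤ G x j) :
    ∃ w : κ → ℝ, 0 ≤ w ∧ w ≠ 0 ∧ ∀ x ∈ Γ, 0 ≤ ∑ j, w j * G x j := by
  classical
  have h0 : (0 : κ → ℝ) ∉ strictUpperImage Γ G := fun ⟨x, hx, hlt⟩ =>
    let ⟨j, hj⟩ := hinc x hx
    (hlt j).not_ge hj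
  obtain ⟨f, hf⟩ := geometric_hahn_banach_open_point (convex_strictUpperImage hΓ hG)
    isOpen_strictUpperImage h0
  simp only [map_zero] at hf
  obtain ⟨x₀, hx₀⟩ := hne
  have hf_nonneg : ∀ v : κ → ℝ, 0 ≤ v → f v ≤ 0 := fun v hv =>
    (nonpos_of_forall_pos_add_mul_neg fun t ht => by
      simpa using hf _ (add_smul_one_add_mem_strictUpperImage hx₀ one_pos
        (smul_nonneg ht.le hv))).2
  have hf_G : ∀ x ∈ Γ, f (G x) ≤ 0 := fun x hx =>
    (nonpos_of_forall_pos_add_mul_neg fun t ht => by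
      simpa using hf _ (add_smul_one_add_mem_strictUpperImage hx ht le_rfl)).1
  have hrep (u : κ → ℝ) : f u = ∑ j, f (Pi.single j 1) * u j :=
    (f : (κ → ℝ) →ₗ[ℝ] ℝ).eq_sum_mul_single u
  refine ⟨fun j => -f (Pi.single j 1),
    fun j => neg_nonneg.2 (hf_nonneg _ (Pi.single_nonneg.2 zero_le_one)), fun hw => ?_,
    fun x hx => ?_⟩
  · have hzero : ∀ j, f (Pi.single j 1) = 0 := fun j => neg_eq_zero.1 (congrFun hw j)
    have := hf _ (add_smul_one_add_mem_strictUpperImage hx₀ one_pos le_rfl)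
    rw [hrep] at this
    simp [hzero] at this
  · have := hf_G x hx
    rw [hrep] at this
    simpa using this

theorem exists_nonneg_multipliers_of_slater {E ι : Type*} [AddCommGroup E] [Module ℝ E]
    [Fintype ι] {Γ : Set E} {g : E → ι → ℝ} {h : E → ℝ}
    (hg : ∀ i, ConvexOn ℝ Γ fun x => g x i) (hh : ConvexOn ℝ Γ h)
    (slater : ∃ xbar ∈ Γ, ∀ i, g xbar i < 0) (H : ∀ x ∈ Γ, (∀ i, g x i ≤ 0) → 0 ≤ h x) :
    ∃ v : ι → ℝ, (∀ i, 0 ≤ v i) ∧ ∀ x ∈ Γ, 0 ≤ h x + ∑ i, v i * g x i := by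
  obtain ⟨xbar, hxbar, hslater⟩ := slater
  obtain ⟨w, hw, hw₀, hwG⟩ := exists_nonneg_ne_zero_sum_mul_nonneg
    (G := fun x j => Option.elim j (h x) (g x)) hh.1 (fun | none => hh | some i => hg i)
    ⟨xbar, hxbar⟩ fun x hx => by
      by_contra! hlt
      exact (hlt none).not_ge (H x hx fun i => (hlt (some i)).le)
  simp only [Fintype.sum_option, Option.elim] at hwG
  have hpos : 0 < w none := by
    refine (hw none).lt_of_ne fun h0 => ?_
    have hsome : (fun i => w (some i)) ≠ 0 := fun hsome =>
      hw₀ (funext fun | none => h0.symm | some i => congrFun hsome i)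
    have hxbar' := hwG xbar hxbar
    rw [← h0, Pi.zero_apply, zero_mul, zero_add] at hxbar'
    exact (Finset.sum_mul_neg_of_nonneg_of_ne_zero (fun i => hw (some i)) hsome
      hslater).not_ge hxbar'
  refine ⟨fun i => w (some i) / w none, fun i => div_nonneg (hw _) hpos.le, fun x hx => ?_⟩
  calc 0 ≤ (w none * h x + ∑ i, w (some i) * g x i) / w none := div_nonneg (hwG x hx) hpos.le
    _ = h x + ∑ i, w (some i) / w none * g x i := by
      rw [add_div, Finset.sum_div, mul_div_cancel_left₀ _ hpos.ne']
      simp only [div_mul_eq_mul_div]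

theorem stmt_0_general {n r : ℕ} (Γ : Set (Fin n → ℝ))
    (g : (Fin n → ℝ) → Fin r → ℝ) (h : (Fin n → ℝ) → ℝ)
    (hg : ∀ i, ConvexOn ℝ Γ (fun x => g x i)) (hh : ConvexOn ℝ Γ h)
    (slater : ∃ xbar ∈ Γ, ∀ i, g xbar i < 0) :
    (∀ x ∈ Γ, (∀ i, g x i ≤ 0) → 0 ≤ h x) ↔
      ∃ v : Fin r → ℝ, (∀ i, 0 ≤ v i) ∧ ∀ x ∈ Γ, 0 ≤ h x + ∑ i, v i * g x i := by
  refine ⟨exists_nonneg_multipliers_of_slater hg hh slater, fun ⟨v, hv, hvg⟩ x hx hgx => ?_⟩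
  have hsum : ∑ i, v i * g x i ≤ 0 :=
    Finset.sum_nonpos fun i _ => mul_nonpos_of_nonneg_of_nonpos (hv i) (hgx i)
  linarith [hvg x hx]

/-- Lemma 1 (Mangasarian–Wild): under convexity and a Slater condition, the
logical-implication form of prior knowledge is equivalent to the existence of a
nonnegative multiplier vector. -/
theorem stmt_0 {n r : ℕ} (Γ : Set (Fin n → ℝ)) (hΓ : Convex ℝ Γ)
    (g : (Fin n → ℝ) → Fin r → ℝ) (h : (Fin n → ℝ) → ℝ)
    (hg : ∀ i, ConvexOn ℝ Γ (fun x => g x i)) (hh : ConvexOn ℝ Γ h)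
    (slater : ∃ xbar ∈ Γ, ∀ i, g xbar i < 0) :
    (∀ x ∈ Γ, (∀ i, g x i ≤ 0) → 0 ≤ h x) ↔
      ∃ v : Fin r → ℝ, (∀ i, 0 ≤ v i) ∧ ∀ x ∈ Γ, 0 ≤ h x + ∑ i, v i * g x i :=
  stmt_0_general Γ g h hg hh slater
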